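/- arXiv:2211.06042 — 3 statements merged into one kernel-verified Lean document; each statement's English description precedes it below -/
import Mathlib

section
/- Uniqueness of separating times: if S and S' are both separating times for the pair (P, Q), i.e., both satisfy that for every stopping time τ one has P ∼ Q on the trace σ-field F_τ ∩ {τ < S} and P ⊥ Q on F_τ ∩ {τ ≥ S} (and likewise with S' in place of S), then P-a.s. and Q-a.s. S = S'. -/
open MeasureTheory
open scoped ENNReal

namespace SepTime

variable {Ω : Type*}

/-- A `[0,∞]`-valued stopping time: `{τ ≤ t} ∈ F_t` for all `t ∈ [0,∞]`. -/
def IsStopTime (F : ℝ≥0∞ → MeasurableSpace Ω) (τ : Ω → ℝ≥0∞) : Prop :=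
  ∀ t : ℝ≥0∞, MeasurableSet[F t] {ω | τ ω ≤ t}

/-- An extended stopping time, with values in `[0,∞] ∪ {δ}`, modeled as `WithTop ℝ≥0∞`
where `δ = ⊤`. -/
def IsExtStopTime (F : ℝ≥0∞ → MeasurableSpace Ω) (S : Ω → WithTop ℝ≥0∞) : Prop :=
  ∀ t : ℝ≥0∞, MeasurableSet[F t] {ω | S ω ≤ (t : WithTop ℝ≥0∞)}

/-- Membership in the stopped σ-field `F_τ = {A ∈ F : A ∩ {τ ≤ t} ∈ F_t for all t}`. -/
def MemStoppedSigma (m : MeasurableSpace Ω) (F : ℝ≥0∞ → MeasurableSpace Ω)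
    (τ : Ω → ℝ≥0∞) (A : Set Ω) : Prop :=
  MeasurableSet[m] A ∧ ∀ t : ℝ≥0∞, MeasurableSet[F t] (A ∩ {ω | τ ω ≤ t})

/-- `P ∼ Q` on the trace σ-field `F_τ ∩ A`. -/
def EquivOnTrace (m : MeasurableSpace Ω) (F : ℝ≥0∞ → MeasurableSpace Ω)
    (P Q : @Measure Ω m) (τ : Ω → ℝ≥0∞) (A : Set Ω) : Prop :=
  ∀ B : Set Ω, MemStoppedSigma m F τ B → B ⊆ A → (P B = 0 ↔ Q B = 0)

/-- `P ⊥ Q` on the trace σ-field `F_τ ∩ A`. -/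
def SingOnTrace (m : MeasurableSpace Ω) (F : ℝ≥0∞ → MeasurableSpace Ω)
    (P Q : @Measure Ω m) (τ : Ω → ℝ≥0∞) (A : Set Ω) : Prop :=
  ∃ B : Set Ω, MemStoppedSigma m F τ B ∧ B ⊆ A ∧ P (A \ B) = 0 ∧ Q B = 0

/-- `S` is a separating time for `(P, Q)`: for every stopping time `τ`,
`P ∼ Q` on `F_τ ∩ {τ < S}` and `P ⊥ Q` on `F_τ ∩ {τ ≥ S}`. -/
def IsSepTime (m : MeasurableSpace Ω) (F : ℝ≥0∞ → MeasurableSpace Ω)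
    (P Q : @Measure Ω m) (S : Ω → WithTop ℝ≥0∞) : Prop :=
  ∀ τ : Ω → ℝ≥0∞, IsStopTime F τ →
    EquivOnTrace m F P Q τ {ω | (τ ω : WithTop ℝ≥0∞) < S ω} ∧
    SingOnTrace m F P Q τ {ω | S ω ≤ (τ ω : WithTop ℝ≥0∞)}

/-- Right-continuity of the filtration: `F_t = ⋂_{s > t} F_s`. -/
def RightContinuousFiltration (F : ℝ≥0∞ → MeasurableSpace Ω) : Prop :=
  ∀ t : ℝ≥0∞, t ≠ ∞ → F t = ⨅ s ∈ Set.Ioi t, F s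

end SepTime

/-!
Take `τ ≡ t` constant. On `{S' ≤ t} ∩ {t < S}` the measures are singular (as `S' ≤ τ`) and
equivalent (as `τ < S`), and this set lies in `F_t`; so it is both `P`- and `Q`-null. If
`S' < S` on a set of positive measure, some `t` from a countable family (rationals and `∞`)
fits between them there, a contradiction; by symmetry `S = S'` almost surely.
-/

namespace SepTime

variable {Ω : Type*} {F : ℝ≥0∞ → MeasurableSpace Ω}

lemma isStopTime_const (t : ℝ≥0∞) : IsStopTime F (fun _ : Ω => t) := fun s => by
  by_cases hts : t ≤ s <;> simp [hts]

variable [m : MeasurableSpace Ω]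

lemma MemStoppedSigma.inter {τ : Ω → ℝ≥0∞} {A B : Set Ω} (hA : MemStoppedSigma m F τ A)
    (hB : MemStoppedSigma m F τ B) : MemStoppedSigma m F τ (A ∩ B) := by
  refine ⟨hA.1.inter hB.1, fun t => ?_⟩
  rw [Set.inter_inter_distrib_right]
  exact (hA.2 t).inter (hB.2 t)

lemma MemStoppedSigma.diff {τ : Ω → ℝ≥0∞} {A B : Set Ω} (hA : MemStoppedSigma m F τ A)
    (hB : MemStoppedSigma m F τ B) : MemStoppedSigma m F τ (A \ B) := by
  refine ⟨hA.1.diff hB.1, fun t => ?_⟩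
  rw [Set.inter_sdiff_distrib_right]
  exact (hA.2 t).diff (hB.2 t)

lemma memStoppedSigma_const (hmono : Monotone F) (hle : ∀ t, F t ≤ m) {t : ℝ≥0∞} {C : Set Ω}
    (hC : MeasurableSet[F t] C) : MemStoppedSigma m F (fun _ => t) C := by
  refine ⟨hle t _ hC, fun s => ?_⟩
  by_cases hts : t ≤ s
  · simpa [hts] using hmono hts _ hC
  · simp [hts]

lemma null_inter_of_equivOnTrace_of_singOnTrace {P Q : Measure Ω} {τ : Ω → ℝ≥0∞}
    {A A' : Set Ω} (hA : MemStoppedSigma m F τ A) (hA' : MemStoppedSigma m F τ A')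
    (hequiv : EquivOnTrace m F P Q τ A) (hsing : SingOnTrace m F P Q τ A') :
    P (A' ∩ A) = 0 ∧ Q (A' ∩ A) = 0 := by
  obtain ⟨B, hB, -, hPB, hQB⟩ := hsing
  have hPBA : P (B ∩ A) = 0 :=
    (hequiv _ (hB.inter hA) Set.inter_subset_right).2 (measure_mono_null Set.inter_subset_left hQB)
  have hQBA : Q ((A' \ B) ∩ A) = 0 :=
    (hequiv _ ((hA'.diff hB).inter hA) Set.inter_subset_right).1
      (measure_mono_null Set.inter_subset_left hPB)
  constructor
  · refine measure_mono_null (fun ω ⟨hωA', hωA⟩ => ?_) (measure_union_null hPB hPBA)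
    by_cases hωB : ω ∈ B
    exacts [Or.inr ⟨hωB, hωA⟩, Or.inl ⟨hωA', hωB⟩]
  · refine measure_mono_null (fun ω ⟨hωA', hωA⟩ => ?_) (measure_union_null hQB hQBA)
    by_cases hωB : ω ∈ B
    exacts [Or.inl hωB, Or.inr ⟨⟨hωA', hωB⟩, hωA⟩]

lemma IsSepTime.null_le_lt (hmono : Monotone F) (hle : ∀ t, F t ≤ m) {P Q : Measure Ω}
    {S S' : Ω → WithTop ℝ≥0∞} (hS : IsExtStopTime F S) (hS' : IsExtStopTime F S')
    (hsep : IsSepTime m F P Q S) (hsep' : IsSepTime m F P Q S') (t : ℝ≥0∞) :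
    P ({ω | S' ω ≤ t} ∩ {ω | t < S ω}) = 0 ∧ Q ({ω | S' ω ≤ t} ∩ {ω | t < S ω}) = 0 := by
  have hlt : MeasurableSet[F t] {ω | (t : WithTop ℝ≥0∞) < S ω} := by
    simpa only [Set.compl_ofPred, not_le] using (hS t).compl
  exact null_inter_of_equivOnTrace_of_singOnTrace (memStoppedSigma_const hmono hle hlt)
    (memStoppedSigma_const hmono hle (hS' t)) (hsep _ (isStopTime_const t)).1
    (hsep' _ (isStopTime_const t)).2

lemma exists_countable_forall_lt_exists_coe_mem_btwn :
    ∃ T : Set ℝ≥0∞, T.Countable ∧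
      ∀ a b : WithTop ℝ≥0∞, a < b → ∃ t ∈ T, a ≤ t ∧ (t : WithTop ℝ≥0∞) < b := by
  refine ⟨insert ∞ (Set.range fun q : ℚ => (Real.toNNReal q : ℝ≥0∞)),
    (Set.countable_range _).insert _, fun a b hab => ?_⟩
  lift a to ℝ≥0∞ using hab.ne_top
  cases b with
  | top => exact ⟨∞, Set.mem_insert _ _, WithTop.coe_le_coe.2 le_top, WithTop.coe_lt_top _⟩
  | coe b =>
    obtain ⟨q, -, haq, hqb⟩ := ENNReal.lt_iff_exists_rat_btwn.1 (WithTop.coe_lt_coe.1 hab)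
    exact ⟨_, Set.mem_insert_of_mem _ ⟨q, rfl⟩, WithTop.coe_le_coe.2 haq.le,
      WithTop.coe_lt_coe.2 hqb⟩

lemma ae_le_of_forall_null_le_lt {μ : Measure Ω} {f g : Ω → WithTop ℝ≥0∞}
    (h : ∀ t : ℝ≥0∞, μ ({ω | g ω ≤ t} ∩ {ω | t < f ω}) = 0) : f ≤ᵐ[μ] g := by
  obtain ⟨T, hT, hbtwn⟩ := exists_countable_forall_lt_exists_coe_mem_btwn
  have hT_ae : ∀ᵐ ω ∂μ, ∀ t ∈ T, ω ∉ {ω | g ω ≤ t} ∩ {ω | t < f ω} :=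
    (ae_ball_iff hT).2 fun t _ => measure_eq_zero_iff_ae_notMem.1 (h t)
  filter_upwards [hT_ae] with ω hω
  by_contra! hgf
  obtain ⟨t, htT, hgt, htf⟩ := hbtwn _ _ hgf
  exact hω t htT ⟨hgt, htf⟩

end SepTime

theorem separating_time_unique_general {Ω : Type*} [m : MeasurableSpace Ω]
    (F : ℝ≥0∞ → MeasurableSpace Ω) (hmono : Monotone F) (hle : ∀ t, F t ≤ m)
    (P Q : Measure Ω)
    (S S' : Ω → WithTop ℝ≥0∞)
    (hS : SepTime.IsExtStopTime F S) (hS' : SepTime.IsExtStopTime F S')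
    (hsep : SepTime.IsSepTime m F P Q S) (hsep' : SepTime.IsSepTime m F P Q S') :
    (∀ᵐ ω ∂P, S ω = S' ω) ∧ (∀ᵐ ω ∂Q, S ω = S' ω) := by
  have hSS' := hsep.null_le_lt hmono hle hS hS' hsep'
  have hS'S := hsep'.null_le_lt hmono hle hS' hS hsep
  exact ⟨(SepTime.ae_le_of_forall_null_le_lt fun t => (hSS' t).1).antisymm
      (SepTime.ae_le_of_forall_null_le_lt fun t => (hS'S t).1),
    (SepTime.ae_le_of_forall_null_le_lt fun t => (hSS' t).2).antisymm
      (SepTime.ae_le_of_forall_null_le_lt fun t => (hS'S t).2)⟩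

/-- **Uniqueness of separating times.** If `S` and `S'` are both separating times for the
pair `(P, Q)` on a filtered space with a right-continuous filtration, then `P`-a.s. and
`Q`-a.s. `S = S'`. -/
theorem separating_time_unique {Ω : Type*} [m : MeasurableSpace Ω]
    (F : ℝ≥0∞ → MeasurableSpace Ω) (hmono : Monotone F) (hle : ∀ t, F t ≤ m)
    (hrc : SepTime.RightContinuousFiltration F)
    (P Q : Measure Ω) [IsProbabilityMeasure P] [IsProbabilityMeasure Q]
    (S S' : Ω → WithTop ℝ≥0∞)
    (hS : SepTime.IsExtStopTime F S) (hS' : SepTime.IsExtStopTime F S')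
    (hsep : SepTime.IsSepTime m F P Q S) (hsep' : SepTime.IsSepTime m F P Q S') :
    (∀ᵐ ω ∂P, S ω = S' ω) ∧ (∀ᵐ ω ∂Q, S ω = S' ω) :=
  separating_time_unique_general (m := m) F hmono hle P Q S S' hS hS' hsep hsep'
end

section
/- Convergence of the generalized density process: (P+Q)-almost surely, Z_n → ∂P/∂Q as n → ∞, where Z_n is the generalized Radon–Nikodym derivative of P|_{F_n} with respect to Q|_{F_n} and ∂P/∂Q is the generalized Radon–Nikodym derivative of P with respect to Q on F. -/
/-!
Let `γ = (P + Q)/2`. Restricted to `F n`, the densities `dP/dγ` and `dQ/dγ` become their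
conditional expectations given `F n`, so Lévy's upward theorem makes them converge `γ`-a.s.
to `dP/dγ` and `dQ/dγ`. Since `P + Q ≪ γ`, this holds `(P + Q)`-a.s., and `(P + Q)`-a.s. the
limits are not both zero and `dQ/dγ` is finite, which is exactly where the generalized ratio
`(a, b) ↦ a / b` (with `0 / 0 = 1`) is continuous.
-/

open MeasureTheory Filter
open scoped ENNReal Topology

namespace MeasureTheory

variable {Ω : Type*}

lemma trim_smul {m m0 : MeasurableSpace Ω} (hm : m ≤ m0) (μ : Measure Ω) (c : ℝ≥0∞) :
    (c • μ).trim hm = c • μ.trim hm := by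
  refine @Measure.ext _ m _ _ fun s hs => ?_
  simp [trim_measurableSet_eq hm hs]

lemma ae_tendsto_rnDeriv_trim {m : MeasurableSpace Ω} (ℱ : Filtration ℕ m) (hℱ : ⨆ n, ℱ n = m)
    {ν μ : Measure Ω} [IsFiniteMeasure ν] [IsFiniteMeasure μ] (hνμ : ν ≪ μ) :
    ∀ᵐ ω ∂μ, Tendsto (fun n => (ν.trim (ℱ.le n)).rnDeriv (μ.trim (ℱ.le n)) ω) atTop
      (𝓝 (ν.rnDeriv μ ω)) := by
  have hmeas : StronglyMeasurable[⨆ n, ℱ n] fun ω => (ν.rnDeriv μ ω).toReal := by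
    rw [hℱ]
    exact (Measure.measurable_rnDeriv ν μ).ennreal_toReal.stronglyMeasurable
  have hcondExp : ∀ᵐ ω ∂μ, ∀ n, ((ν.trim (ℱ.le n)).rnDeriv (μ.trim (ℱ.le n)) ω).toReal
      = μ[fun ω => (ν.rnDeriv μ ω).toReal | ℱ n] ω :=
    ae_all_iff.2 fun n => ae_of_ae_trim (ℱ.le n) (toReal_rnDeriv_trim (ℱ.le n) hνμ)
  have hfin : ∀ᵐ ω ∂μ, ∀ n, (ν.trim (ℱ.le n)).rnDeriv (μ.trim (ℱ.le n)) ω ≠ ∞ :=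
    ae_all_iff.2 fun n => ae_of_ae_trim (ℱ.le n) (Measure.rnDeriv_ne_top _ _)
  filter_upwards [Measure.integrable_toReal_rnDeriv.tendsto_ae_condExp hmeas, hcondExp, hfin,
    Measure.rnDeriv_ne_top ν μ] with ω hlevy hω hωfin hlim
  exact (ENNReal.tendsto_toReal_iff hωfin hlim).1 (hlevy.congr fun n => (hω n).symm)

lemma ae_add_rnDeriv_ne_zero_or [MeasurableSpace Ω] {μ ν γ : Measure Ω}
    [μ.HaveLebesgueDecomposition γ] [ν.HaveLebesgueDecomposition γ] (hμ : μ ≪ γ) (hν : ν ≪ γ) :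
    ∀ᵐ ω ∂(μ + ν), ¬(μ.rnDeriv γ ω = 0 ∧ ν.rnDeriv γ ω = 0) := by
  rw [ae_add_measure_iff]
  exact ⟨(Measure.rnDeriv_pos hμ).mono fun ω h h0 => h.ne' h0.1,
    (Measure.rnDeriv_pos hν).mono fun ω h h0 => h.ne' h0.2⟩

end MeasureTheory

lemma ENNReal.Tendsto.ite_div {α : Type*} {l : Filter α} {f g : α → ℝ≥0∞} {a b : ℝ≥0∞}
    (hf : Tendsto f l (𝓝 a)) (hg : Tendsto g l (𝓝 b)) (hab : ¬(a = 0 ∧ b = 0))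
    (hb : b ≠ ∞ ∨ a ≠ ∞) :
    Tendsto (fun x => if f x = 0 ∧ g x = 0 then 1 else f x / g x) l
      (𝓝 (if a = 0 ∧ b = 0 then 1 else a / b)) := by
  have hab' : a ≠ 0 ∨ b ≠ 0 := not_and_or.1 hab
  have hev : ∀ᶠ x in l, ¬(f x = 0 ∧ g x = 0) := by
    rcases hab' with ha | hb0
    · exact (hf.eventually_ne ha).mono fun x hx h => hx h.1
    · exact (hg.eventually_ne hb0).mono fun x hx h => hx h.2
  rw [if_neg hab]
  exact (ENNReal.Tendsto.div hf hab' hg hb).congr' (hev.mono fun x hx => (if_neg hx).symm)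

/-- **Convergence of the generalized density process.** With `F = σ(⋃ F_n)`,
`(P+Q)`-a.s. `Z_n → ∂P/∂Q`, where `Z_n` is the generalized Radon–Nikodym derivative of
`P|_{F_n}` w.r.t. `Q|_{F_n}` (computed with `γ_n := (P|_{F_n} + Q|_{F_n})/2`, conventions
`0/0 := 1`, `x/0 := ∞`), and `∂P/∂Q` is the one of `P` w.r.t. `Q` on `F`
(with `γ := (P+Q)/2`). -/
theorem gdensity_process_tendsto {Ω : Type*} {m : MeasurableSpace Ω}
    (F : ℕ → MeasurableSpace Ω) (hmono : Monotone F) (hle : ∀ n, F n ≤ m)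
    (hgen : (⨆ n, F n) = m)
    (P Q : Measure Ω) [IsProbabilityMeasure P] [IsProbabilityMeasure Q] :
    ∀ᵐ ω ∂(P + Q),
      Tendsto
        (fun n : ℕ =>
          if (P.trim (hle n)).rnDeriv ((2⁻¹ : ℝ≥0∞) • (P.trim (hle n) + Q.trim (hle n))) ω = 0 ∧
             (Q.trim (hle n)).rnDeriv ((2⁻¹ : ℝ≥0∞) • (P.trim (hle n) + Q.trim (hle n))) ω = 0
          then 1
          else (P.trim (hle n)).rnDeriv ((2⁻¹ : ℝ≥0∞) • (P.trim (hle n) + Q.trim (hle n))) ω /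
               (Q.trim (hle n)).rnDeriv ((2⁻¹ : ℝ≥0∞) • (P.trim (hle n) + Q.trim (hle n))) ω)
        atTop
        (𝓝 (if P.rnDeriv ((2⁻¹ : ℝ≥0∞) • (P + Q)) ω = 0 ∧
               Q.rnDeriv ((2⁻¹ : ℝ≥0∞) • (P + Q)) ω = 0
            then 1
            else P.rnDeriv ((2⁻¹ : ℝ≥0∞) • (P + Q)) ω /
                 Q.rnDeriv ((2⁻¹ : ℝ≥0∞) • (P + Q)) ω)) := by
  set γ : Measure Ω := (2⁻¹ : ℝ≥0∞) • (P + Q)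
  have hγ_trim : ∀ n, (2⁻¹ : ℝ≥0∞) • (P.trim (hle n) + Q.trim (hle n)) = γ.trim (hle n) :=
    fun n => by rw [trim_smul, trim_add]
  simp only [hγ_trim]
  have : IsFiniteMeasure γ := Measure.smul_finite _ (by simp)
  have hPQγ : P + Q ≪ γ := Measure.absolutelyContinuous_smul (by simp)
  obtain ⟨hPγ, hQγ⟩ := Measure.AbsolutelyContinuous.add_left_iff.1 hPQγ
  let ℱ : Filtration ℕ m := ⟨F, hmono, hle⟩
  filter_upwards [hPQγ.ae_le (ae_tendsto_rnDeriv_trim ℱ hgen hPγ),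
    hPQγ.ae_le (ae_tendsto_rnDeriv_trim ℱ hgen hQγ), hPQγ.ae_le (Measure.rnDeriv_ne_top Q γ),
    ae_add_rnDeriv_ne_zero_or hPγ hQγ] with ω hP hQ hQ_fin hne
  exact ENNReal.Tendsto.ite_div hP hQ hne (Or.inl hQ_fin)
end

section
/- Jessen's theorem: Q-almost surely, d(P|_{F_n})^{ac}/d(Q|_{F_n}) → dP^{ac}/dQ as n → ∞, where for a probability measure α on a σ-field G, α^{ac} denotes the absolutely continuous part of α with respect to the restriction of Q to G in the Lebesgue decomposition. -/
/-!
Put `ρ = P + Q`. Both `P` and `Q` are absolutely continuous with respect to `ρ`, and on every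
σ-algebra the density `dP/dQ` is the ratio `(dP/dρ) / (dQ/dρ)`, `Q`-a.e. For a measure `μ ≪ ρ`,
the density of `μ|_{F_n}` with respect to `ρ|_{F_n}` is the conditional expectation of `dμ/dρ`
given `F_n`, so it converges `ρ`-a.e. to `dμ/dρ` by Lévy's upward theorem. Passing to the ratio,
which is legitimate because `dQ/dρ` is positive and `dP/dρ` finite `Q`-a.e., gives the theorem.
-/

open MeasureTheory Filter
open scoped ENNReal Topology

namespace MeasureTheory

variable {Ω : Type*} {m : MeasurableSpace Ω} {ℱ : Filtration ℕ m}

theorem tendsto_rnDeriv_trim_of_absolutelyContinuous (hℱ : ⨆ n, ℱ n = m)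
    {μ ρ : Measure Ω} [IsFiniteMeasure μ] [IsFiniteMeasure ρ] (hμρ : μ ≪ ρ) :
    ∀ᵐ x ∂ρ, Tendsto (fun n ↦ (μ.trim (ℱ.le n)).rnDeriv (ρ.trim (ℱ.le n)) x)
      atTop (𝓝 (μ.rnDeriv ρ x)) := by
  have h_condExp : ∀ᵐ x ∂ρ, ∀ n, (μ.trim (ℱ.le n)).rnDeriv (ρ.trim (ℱ.le n)) x
      = ENNReal.ofReal (ρ[fun y ↦ (μ.rnDeriv ρ y).toReal | ℱ n] x) :=
    ae_all_iff.2 fun n ↦ ae_eq_of_ae_eq_trim (rnDeriv_trim (ℱ.le n) hμρ)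
  have h_levy : ∀ᵐ x ∂ρ, Tendsto (fun n ↦ ρ[fun y ↦ (μ.rnDeriv ρ y).toReal | ℱ n] x)
      atTop (𝓝 (μ.rnDeriv ρ x).toReal) := by
    refine Measure.integrable_toReal_rnDeriv.tendsto_ae_condExp ?_
    rw [hℱ]
    exact (Measure.measurable_rnDeriv μ ρ).ennreal_toReal.stronglyMeasurable
  filter_upwards [h_condExp, h_levy, Measure.rnDeriv_ne_top μ ρ] with x hx_eq hx_lim hx_ne_top
  rw [← ENNReal.ofReal_toReal hx_ne_top]
  exact (ENNReal.tendsto_ofReal hx_lim).congr fun n ↦ (hx_eq n).symm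

theorem tendsto_rnDeriv_trim (hℱ : ⨆ n, ℱ n = m) (μ ν : Measure Ω)
    [IsFiniteMeasure μ] [IsFiniteMeasure ν] :
    ∀ᵐ x ∂ν, Tendsto (fun n ↦ (μ.trim (ℱ.le n)).rnDeriv (ν.trim (ℱ.le n)) x)
      atTop (𝓝 (μ.rnDeriv ν x)) := by
  have hμ : μ ≪ μ + ν := rfl.absolutelyContinuous.add_right _
  have hν : ν ≪ μ + ν := rfl.absolutelyContinuous.add_right' _
  have h_div_trim : ∀ᵐ x ∂ν, ∀ n, (μ.trim (ℱ.le n)).rnDeriv (ν.trim (ℱ.le n)) x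
      = (μ.trim (ℱ.le n)).rnDeriv ((μ + ν).trim (ℱ.le n)) x
        / (ν.trim (ℱ.le n)).rnDeriv ((μ + ν).trim (ℱ.le n)) x := by
    refine ae_all_iff.2 fun n ↦ ae_eq_of_ae_eq_trim (hm := ℱ.le n) ?_
    rw [trim_add]
    exact Measure.rnDeriv_eq_div_rnDeriv_add _ _
  filter_upwards [h_div_trim, Measure.rnDeriv_eq_div_rnDeriv_add μ ν,
    hν.ae_le (tendsto_rnDeriv_trim_of_absolutelyContinuous hℱ hμ),
    hν.ae_le (tendsto_rnDeriv_trim_of_absolutelyContinuous hℱ hν),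
    hν.ae_le (Measure.rnDeriv_ne_top μ (μ + ν)), Measure.rnDeriv_pos hν]
    with x hx_trim hx_div hx_lim_μ hx_lim_ν hx_ne_top hx_pos
  rw [hx_div]
  exact (ENNReal.Tendsto.div hx_lim_μ (Or.inr hx_pos.ne') hx_lim_ν (Or.inr hx_ne_top)).congr
    fun n ↦ (hx_trim n).symm

end MeasureTheory

/-- **Jessen's theorem.** With `F = σ(⋃ F_n)`, `Q`-a.s.
`d(P|_{F_n})^{ac}/d(Q|_{F_n}) → dP^{ac}/dQ` as `n → ∞`, where the Radon–Nikodym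
derivatives are the densities of the absolutely continuous parts in the respective
Lebesgue decompositions (this is exactly Mathlib's `Measure.rnDeriv`). -/
theorem jessen_tendsto_rnDeriv {Ω : Type*} {m : MeasurableSpace Ω}
    (F : ℕ → MeasurableSpace Ω) (hmono : Monotone F) (hle : ∀ n, F n ≤ m)
    (hgen : (⨆ n, F n) = m)
    (P Q : Measure Ω) [IsProbabilityMeasure P] [IsProbabilityMeasure Q] :
    ∀ᵐ ω ∂Q,
      Tendsto (fun n : ℕ => (P.trim (hle n)).rnDeriv (Q.trim (hle n)) ω)
        atTop (𝓝 (P.rnDeriv Q ω)) :=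
  tendsto_rnDeriv_trim (ℱ := ⟨F, hmono, hle⟩) hgen P Q
end
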